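/- There exists a constant C > 0 such that for all n: (a) for λ_{j,n} = λ_{k,n} ∈ {0, π}, |S3(λ_{j,n}, λ_{k,n}) − f1(λ_{j,n}) f2(λ_{j,n})| ≤ C/n; (b) in all other cases of Fourier frequencies λ_{j,n}, λ_{k,n} ∈ [0,π] (i.e. λ_{j,n} = λ_{k,n} ∉ {0,π} or λ_{j,n} ≠ λ_{k,n}), |S3(λ_{j,n}, λ_{k,n})| ≤ C/n². -/

import Mathlib

/-!
Both inner double sums of `S3` have the form `A = ∑_{s,t=1}^n γ(s-t) u^s v^t` with `|u| = |v| = 1`.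
Grouping by the lag `h = s - t` gives `A = ∑_h γ(h) u^h ∑_{t ∈ T_h} (uv)^t`, where `T_h` is the
set of `t ∈ [1, n]` with `t + h ∈ [1, n]`, of size `n - |h|`. At Fourier frequencies `w = uv` is
an `n`-th root of unity. If `w = 1` (case (a)), then `A / n = ∑_h γ(h) u^h (1 - |h|/n)`, which is
within `∑ |h| |γ(h)| / n` of `2π f(λ)`. Otherwise `∑_{t=1}^n w^t = 0`, so the sum over `T_h` is
minus a sum over the at most `|h|` missing indices, and `|A| ≤ ∑ |h| |γ(h)|` is bounded in `n`.
-/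

open Complex Finset
open scoped Real

/-- The spectral density `f(λ) = (2π)^{-1} Σ_{h∈ℤ} γ(h) e^{−ihλ}` of an absolutely
summable autocovariance function `γ : ℤ → ℂ`. -/
noncomputable def specDens (γ : ℤ → ℂ) (l : ℝ) : ℂ :=
  (2 * π : ℂ)⁻¹ * ∑' h : ℤ, γ h * Complex.exp (-Complex.I * (h : ℂ) * (l : ℂ))

/-- `S3(λ,μ) = (1/(4π²n²)) Σ_{t1,t2,t3,t4=1}^{n} γ1(t1−t4) γ2(t2−t3)
e^{−i(t1−t2)λ + i(t3−t4)μ}`. -/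
noncomputable def S3sum (γ1 γ2 : ℤ → ℂ) (n : ℕ) (l μ : ℝ) : ℂ :=
  (1 / (4 * (π : ℂ) ^ 2 * (n : ℂ) ^ 2)) *
    ∑ t1 ∈ Finset.Icc (1 : ℤ) n, ∑ t2 ∈ Finset.Icc (1 : ℤ) n,
      ∑ t3 ∈ Finset.Icc (1 : ℤ) n, ∑ t4 ∈ Finset.Icc (1 : ℤ) n,
        γ1 (t1 - t4) * γ2 (t2 - t3) *
          Complex.exp (-Complex.I * ((t1 : ℂ) - (t2 : ℂ)) * (l : ℂ) +
            Complex.I * ((t3 : ℂ) - (t4 : ℂ)) * (μ : ℂ))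

noncomputable def lagSet (n : ℕ) (h : ℤ) : Finset ℤ := Icc 1 (n : ℤ) ∩ Icc (1 - h) (n - h)

lemma lagSet_subset (n : ℕ) (h : ℤ) : lagSet n h ⊆ Icc 1 (n : ℤ) := inter_subset_left

lemma card_lagSet (n : ℕ) (h : ℤ) : #(lagSet n h) = n - h.natAbs := by
  have : lagSet n h = Icc (max 1 (1 - h)) (min n (n - h)) := by ext; simp [lagSet]; omega
  rw [this, Int.card_Icc]; omega

lemma card_Icc_sdiff_lagSet_le (n : ℕ) (h : ℤ) : #(Icc 1 (n : ℤ) \ lagSet n h) ≤ h.natAbs := by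
  rw [card_sdiff_of_subset (lagSet_subset n h), card_lagSet, Int.card_Icc]; omega

lemma sum_Icc_Icc_eq_sum_lagSet {M : Type*} [AddCommMonoid M] (n : ℕ) (F : ℤ → ℤ → M) :
    ∑ s ∈ Icc 1 (n : ℤ), ∑ t ∈ Icc 1 (n : ℤ), F s t =
      ∑ h ∈ Icc (1 - n : ℤ) (n - 1), ∑ t ∈ lagSet n h, F (t + h) t := by
  rw [← sum_product', sum_sigma']
  refine sum_nbij' (fun p => ⟨p.1 - p.2, p.2⟩) (fun q => (q.2 + q.1, q.2)) ?_ ?_ ?_ ?_ ?_ <;>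
    simp [lagSet] <;> omega

lemma sum_Icc_zpow_eq_zero {w : ℂ} {n : ℕ} (hwn : w ^ n = 1) (hw : w ≠ 1) :
    ∑ t ∈ Icc 1 (n : ℤ), w ^ t = 0 := by
  obtain rfl | hn := eq_or_ne n 0
  · simp
  have hw0 : w ≠ 0 := by rintro rfl; simp [hn] at hwn
  rw [Int.Icc_eq_finset_map, sum_map]
  simp [zpow_add₀ hw0, ← mul_sum, geom_sum_eq hw, hwn]

noncomputable def lagSum (γ : ℤ → ℂ) (n : ℕ) (u v : ℂ) : ℂ :=
  ∑ s ∈ Icc 1 (n : ℤ), ∑ t ∈ Icc 1 (n : ℤ), γ (s - t) * u ^ s * v ^ t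

lemma lagSum_eq_sum_lagSet (γ : ℤ → ℂ) (n : ℕ) {u : ℂ} (hu : u ≠ 0) (v : ℂ) :
    lagSum γ n u v = ∑ h ∈ Icc (1 - n : ℤ) (n - 1), γ h * u ^ h * ∑ t ∈ lagSet n h, (u * v) ^ t := by
  rw [lagSum, sum_Icc_Icc_eq_sum_lagSet]
  refine sum_congr rfl fun h _ => ?_
  rw [mul_sum]
  refine sum_congr rfl fun t _ => ?_
  rw [add_sub_cancel_left, zpow_add₀ hu, mul_zpow]
  ring

lemma lagSum_of_mul_eq_one (γ : ℤ → ℂ) (n : ℕ) {u v : ℂ} (huv : u * v = 1) :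
    lagSum γ n u v = ∑ h ∈ Icc (1 - n : ℤ) (n - 1), γ h * u ^ h * ((n - h.natAbs : ℕ) : ℂ) := by
  rw [lagSum_eq_sum_lagSet γ n (left_ne_zero_of_mul_eq_one huv)]
  simp [huv, card_lagSet]

lemma norm_sum_lagSet_zpow_le {w : ℂ} {n : ℕ} (hw : ‖w‖ = 1) (hwn : w ^ n = 1) (hw1 : w ≠ 1)
    (h : ℤ) : ‖∑ t ∈ lagSet n h, w ^ t‖ ≤ h.natAbs := by
  have hsum := sum_sdiff (f := (w ^ ·)) (lagSet_subset n h)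
  rw [sum_Icc_zpow_eq_zero hwn hw1] at hsum
  rw [eq_neg_of_add_eq_zero_right hsum, norm_neg]
  calc ‖∑ t ∈ Icc 1 (n : ℤ) \ lagSet n h, w ^ t‖ ≤ ∑ t ∈ Icc 1 (n : ℤ) \ lagSet n h, (1 : ℝ) :=
        norm_sum_le_of_le _ fun t _ => by rw [norm_zpow, hw, one_zpow]
    _ = #(Icc 1 (n : ℤ) \ lagSet n h) := by simp
    _ ≤ h.natAbs := mod_cast card_Icc_sdiff_lagSet_le n h

noncomputable def weightedNorm (γ : ℤ → ℂ) : ℝ := ∑' h : ℤ, (1 + |h| : ℝ) * ‖γ h‖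

lemma weight_nonneg (γ : ℤ → ℂ) (h : ℤ) : 0 ≤ (1 + |h| : ℝ) * ‖γ h‖ := by positivity

lemma weightedNorm_nonneg (γ : ℤ → ℂ) : 0 ≤ weightedNorm γ := tsum_nonneg (weight_nonneg γ)

lemma natAbs_mul_norm_le_weight (γ : ℤ → ℂ) (h : ℤ) :
    (h.natAbs : ℝ) * ‖γ h‖ ≤ (1 + |h| : ℝ) * ‖γ h‖ := by
  rw [Nat.cast_natAbs]
  exact mul_le_mul_of_nonneg_right (le_add_of_nonneg_left zero_le_one) (norm_nonneg _)

lemma norm_le_weight (γ : ℤ → ℂ) (h : ℤ) : ‖γ h‖ ≤ (1 + |h| : ℝ) * ‖γ h‖ :=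
  le_mul_of_one_le_left (norm_nonneg _) (le_add_of_nonneg_right (by positivity))

lemma norm_mul_zpow {u : ℂ} (hu : ‖u‖ = 1) (z : ℂ) (h : ℤ) : ‖z * u ^ h‖ = ‖z‖ := by
  rw [norm_mul, norm_zpow, hu, one_zpow, mul_one]

lemma norm_tsum_mul_zpow_le {γ : ℤ → ℂ} (hγ : Summable fun h : ℤ => (1 + |h| : ℝ) * ‖γ h‖)
    {u : ℂ} (hu : ‖u‖ = 1) : ‖∑' h, γ h * u ^ h‖ ≤ weightedNorm γ :=
  tsum_of_norm_bounded hγ.hasSum fun h => (norm_mul_zpow hu _ h).trans_le (norm_le_weight γ h)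

lemma norm_lagSum_le {γ : ℤ → ℂ} (hγ : Summable fun h : ℤ => (1 + |h| : ℝ) * ‖γ h‖) (n : ℕ)
    {u v : ℂ} (hu : ‖u‖ = 1) (hv : ‖v‖ = 1) (hn : (u * v) ^ n = 1) (h1 : u * v ≠ 1) :
    ‖lagSum γ n u v‖ ≤ weightedNorm γ := by
  have huv : ‖u * v‖ = 1 := by rw [norm_mul, hu, hv, one_mul]
  rw [lagSum_eq_sum_lagSet γ n (norm_ne_zero_iff.mp (hu ▸ one_ne_zero))]
  calc _ ≤ ∑ h ∈ Icc (1 - n : ℤ) (n - 1), (1 + |h| : ℝ) * ‖γ h‖ := by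
        refine norm_sum_le_of_le _ fun h _ => ?_
        rw [norm_mul, norm_mul_zpow hu, mul_comm]
        exact (mul_le_mul_of_nonneg_right (norm_sum_lagSet_zpow_le huv hn h1 h)
          (norm_nonneg _)).trans (natAbs_mul_norm_le_weight γ h)
    _ ≤ weightedNorm γ := hγ.sum_le_tsum _ fun h _ => weight_nonneg γ h

lemma norm_natCast_sub_tsub_natAbs_le (n : ℕ) (h : ℤ) :
    ‖(n : ℂ) - ((n - h.natAbs : ℕ) : ℂ)‖ ≤ h.natAbs := by
  rw [← Nat.cast_sub (Nat.sub_le _ _), norm_natCast]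
  exact_mod_cast (by omega : n - (n - h.natAbs) ≤ h.natAbs)

lemma norm_lagSum_div_sub_tsum_le {γ : ℤ → ℂ} (hγ : Summable fun h : ℤ => (1 + |h| : ℝ) * ‖γ h‖)
    {n : ℕ} (hn : 0 < n) {u v : ℂ} (hu : ‖u‖ = 1) (huv : u * v = 1) :
    ‖lagSum γ n u v / n - ∑' h, γ h * u ^ h‖ ≤ weightedNorm γ / n := by
  have hnC : (n : ℂ) ≠ 0 := Nat.cast_ne_zero.mpr hn.ne'
  have hA : HasSum (fun h => γ h * u ^ h * ((n - h.natAbs : ℕ) : ℂ) / n) (lagSum γ n u v / n) := by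
    rw [lagSum_of_mul_eq_one γ n huv, sum_div]
    refine hasSum_sum_of_ne_finset_zero fun h hh => ?_
    simp only [mem_Icc, not_and_or, not_le] at hh
    rw [Nat.sub_eq_zero_of_le (by omega), Nat.cast_zero, mul_zero, zero_div]
  have hF : HasSum (fun h => γ h * u ^ h) (∑' h, γ h * u ^ h) :=
    (hγ.of_norm_bounded fun h => (norm_mul_zpow hu _ h).trans_le (norm_le_weight γ h)).hasSum
  refine (hA.sub hF).norm_le_of_bounded (hγ.hasSum.div_const n) fun h => ?_
  have hterm : γ h * u ^ h * ((n - h.natAbs : ℕ) : ℂ) / n - γ h * u ^ h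
      = -(γ h * u ^ h * ((n : ℂ) - ((n - h.natAbs : ℕ) : ℂ)) / n) := by
    field_simp; ring
  rw [hterm, norm_neg, norm_div, norm_mul, norm_mul_zpow hu, norm_natCast, mul_comm]
  refine div_le_div_of_nonneg_right ?_ n.cast_nonneg
  exact (mul_le_mul_of_nonneg_right (norm_natCast_sub_tsub_natAbs_le n h) (norm_nonneg _)).trans
    (natAbs_mul_norm_le_weight γ h)

lemma S3sum_eq_lagSum_mul_lagSum (γ1 γ2 : ℤ → ℂ) (n : ℕ) (l μ : ℝ) :
    S3sum γ1 γ2 n l μ = 1 / (4 * (π : ℂ) ^ 2 * (n : ℂ) ^ 2) *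
      (lagSum γ1 n (exp (l * I))⁻¹ (exp (μ * I))⁻¹ * lagSum γ2 n (exp (l * I)) (exp (μ * I))) := by
  rw [S3sum, lagSum, lagSum, sum_mul_sum]
  congr 1
  refine sum_congr rfl fun t1 _ => sum_congr rfl fun t2 _ => ?_
  rw [sum_mul_sum, sum_comm]
  refine sum_congr rfl fun t4 _ => sum_congr rfl fun t3 _ => ?_
  simp only [← exp_neg, ← exp_int_mul]
  have hexp : exp (-I * (t1 - t2) * l + I * (t3 - t4) * μ) =
      exp (t1 * -(l * I)) * exp (t4 * -(μ * I)) * (exp (t2 * (l * I)) * exp (t3 * (μ * I))) := by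
    simp only [← exp_add]
    ring_nf
  rw [hexp]
  ring

lemma specDens_eq_tsum (γ : ℤ → ℂ) (l : ℝ) :
    specDens γ l = (2 * π : ℂ)⁻¹ * ∑' h : ℤ, γ h * (exp (l * I))⁻¹ ^ h := by
  simp only [specDens, ← exp_neg, ← exp_int_mul]
  congr 3 with h
  ring_nf

lemma norm_mul_sub_mul_le {R : Type*} [SeminormedRing R] (a₁ a₂ b₁ b₂ : R) :
    ‖a₁ * a₂ - b₁ * b₂‖ ≤ ‖a₁ - b₁‖ * ‖a₂‖ + ‖b₁‖ * ‖a₂ - b₂‖ := by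
  rw [show a₁ * a₂ - b₁ * b₂ = (a₁ - b₁) * a₂ + b₁ * (a₂ - b₂) by noncomm_ring]
  exact (norm_add_le _ _).trans (add_le_add (norm_mul_le _ _) (norm_mul_le _ _))

lemma norm_lagSum_div_le {γ : ℤ → ℂ} (hγ : Summable fun h : ℤ => (1 + |h| : ℝ) * ‖γ h‖)
    {n : ℕ} (hn : 0 < n) {u v : ℂ} (hu : ‖u‖ = 1) (huv : u * v = 1) :
    ‖lagSum γ n u v / n‖ ≤ 2 * weightedNorm γ := calc
  _ ≤ ‖∑' h, γ h * u ^ h‖ + ‖lagSum γ n u v / n - ∑' h, γ h * u ^ h‖ :=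
      norm_le_norm_add_norm_sub' _ _
  _ ≤ weightedNorm γ + weightedNorm γ :=
      add_le_add (norm_tsum_mul_zpow_le hγ hu) ((norm_lagSum_div_sub_tsum_le hγ hn hu huv).trans
        (div_le_self (weightedNorm_nonneg γ) (Nat.one_le_cast.mpr hn)))
  _ = 2 * weightedNorm γ := by ring

lemma norm_S3sum_sub_specDens_mul_le {γ1 γ2 : ℤ → ℂ}
    (h1 : Summable fun h : ℤ => (1 + |h| : ℝ) * ‖γ1 h‖)
    (h2 : Summable fun h : ℤ => (1 + |h| : ℝ) * ‖γ2 h‖) {n : ℕ} (hn : 0 < n) {l : ℝ}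
    (hl : exp (l * I) * exp (l * I) = 1) :
    ‖S3sum γ1 γ2 n l l - specDens γ1 l * specDens γ2 l‖ ≤ weightedNorm γ1 * weightedNorm γ2 / n := by
  set u := exp (l * I)
  have hu : ‖u‖ = 1 := norm_exp_ofReal_mul_I l
  have hW1 := weightedNorm_nonneg γ1
  have hfactor : S3sum γ1 γ2 n l l - specDens γ1 l * specDens γ2 l =
      ((4 * π ^ 2 : ℝ) : ℂ)⁻¹ * (lagSum γ1 n u u / n * (lagSum γ2 n u u / n) -
        (∑' h, γ1 h * u ^ h) * ∑' h, γ2 h * u ^ h) := by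
    have : (n : ℂ) ≠ 0 := Nat.cast_ne_zero.mpr hn.ne'
    rw [S3sum_eq_lagSum_mul_lagSum, specDens_eq_tsum, specDens_eq_tsum,
      inv_eq_of_mul_eq_one_right hl]
    push_cast
    field_simp
    ring
  rw [hfactor, norm_mul, norm_inv, norm_real, Real.norm_of_nonneg (by positivity)]
  calc _ ≤ (4 * π ^ 2)⁻¹ *
        (weightedNorm γ1 / n * (2 * weightedNorm γ2) + weightedNorm γ1 * (weightedNorm γ2 / n)) := by
        gcongr
        refine (norm_mul_sub_mul_le _ _ _ _).trans (add_le_add ?_ ?_)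
        · exact mul_le_mul (norm_lagSum_div_sub_tsum_le h1 hn hu hl)
            (norm_lagSum_div_le h2 hn hu hl) (norm_nonneg _) (by positivity)
        · exact mul_le_mul (norm_tsum_mul_zpow_le h1 hu)
            (norm_lagSum_div_sub_tsum_le h2 hn hu hl) (norm_nonneg _) hW1
    _ = 3 / (4 * π ^ 2) * (weightedNorm γ1 * weightedNorm γ2 / n) := by ring
    _ ≤ weightedNorm γ1 * weightedNorm γ2 / n :=
        mul_le_of_le_one_left (div_nonneg (mul_nonneg hW1 (weightedNorm_nonneg γ2)) n.cast_nonneg)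
          ((div_le_one (by positivity)).mpr (by nlinarith [Real.pi_gt_three]))

lemma norm_S3sum_le {γ1 γ2 : ℤ → ℂ}
    (h1 : Summable fun h : ℤ => (1 + |h| : ℝ) * ‖γ1 h‖)
    (h2 : Summable fun h : ℤ => (1 + |h| : ℝ) * ‖γ2 h‖) {n : ℕ} {l μ : ℝ}
    (hn : (exp (l * I) * exp (μ * I)) ^ n = 1) (hne : exp (l * I) * exp (μ * I) ≠ 1) :
    ‖S3sum γ1 γ2 n l μ‖ ≤ weightedNorm γ1 * weightedNorm γ2 / n ^ 2 := by
  have hl := norm_exp_ofReal_mul_I l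
  have hμ := norm_exp_ofReal_mul_I μ
  have hA1 : ‖lagSum γ1 n (exp (l * I))⁻¹ (exp (μ * I))⁻¹‖ ≤ weightedNorm γ1 :=
    norm_lagSum_le h1 n (by rw [norm_inv, hl, inv_one]) (by rw [norm_inv, hμ, inv_one])
      (by rw [← mul_inv, inv_pow, hn, inv_one]) (by rwa [← mul_inv, inv_ne_one])
  have hA2 := norm_lagSum_le h2 n hl hμ hn hne
  rw [S3sum_eq_lagSum_mul_lagSum, norm_mul, norm_mul]
  calc _ ≤ ‖1 / (4 * (π : ℂ) ^ 2 * (n : ℂ) ^ 2)‖ * (weightedNorm γ1 * weightedNorm γ2) := by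
        gcongr
        exact weightedNorm_nonneg γ1
    _ = (4 * π ^ 2)⁻¹ * (weightedNorm γ1 * weightedNorm γ2 / n ^ 2) := by
        simp [abs_of_pos Real.pi_pos]
        ring
    _ ≤ weightedNorm γ1 * weightedNorm γ2 / n ^ 2 :=
        mul_le_of_le_one_left (div_nonneg (mul_nonneg (weightedNorm_nonneg γ1)
          (weightedNorm_nonneg γ2)) (by positivity))
          (inv_le_one_of_one_le₀ (by nlinarith [Real.pi_gt_three]))

/-- there is a constant `C > 0` such that for all `n`:
(a) for Fourier frequencies `λ_{j,n} = λ_{k,n} ∈ {0,π}` (i.e. `j = k` with `j = 0` or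
`2j = n`), `|S3(λ_{j,n},λ_{k,n}) − f1(λ_{j,n}) f2(λ_{j,n})| ≤ C/n`;
(b) in all other cases of Fourier frequencies `λ_{j,n}, λ_{k,n} ∈ [0,π]`
(`λ_{j,n} = λ_{k,n} ∉ {0,π}` or `λ_{j,n} ≠ λ_{k,n}`),
`|S3(λ_{j,n},λ_{k,n})| ≤ C/n²`. -/
theorem S3_approx (γ1 γ2 : ℤ → ℂ)
    (h1 : Summable fun h : ℤ => (1 + |h| : ℝ) * ‖γ1 h‖)
    (h2 : Summable fun h : ℤ => (1 + |h| : ℝ) * ‖γ2 h‖) :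
    ∃ C > (0 : ℝ), ∀ n : ℕ, 0 < n → ∀ j k : ℕ, 2 * j ≤ n → 2 * k ≤ n →
      ((j = k ∧ (j = 0 ∨ 2 * j = n)) →
        ‖S3sum γ1 γ2 n (2 * π * j / n) (2 * π * k / n) -
            specDens γ1 (2 * π * j / n) * specDens γ2 (2 * π * j / n)‖ ≤ C / n) ∧
      (¬ (j = k ∧ (j = 0 ∨ 2 * j = n)) →
        ‖S3sum γ1 γ2 n (2 * π * j / n) (2 * π * k / n)‖ ≤ C / (n : ℝ) ^ 2) := by
  have hW : 0 ≤ weightedNorm γ1 * weightedNorm γ2 :=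
    mul_nonneg (weightedNorm_nonneg γ1) (weightedNorm_nonneg γ2)
  refine ⟨weightedNorm γ1 * weightedNorm γ2 + 1, by linarith, fun n hn j k hj hk => ?_⟩
  have hζ : IsPrimitiveRoot (exp (2 * π * I / n)) n := isPrimitiveRoot_exp n hn.ne'
  have hfreq (m : ℕ) : exp ((2 * π * m / n : ℝ) * I) = exp (2 * π * I / n) ^ m := by
    rw [← exp_nat_mul]; push_cast; ring_nf
  constructor
  · rintro ⟨rfl, hj0⟩
    refine (norm_S3sum_sub_specDens_mul_le h1 h2 hn ?_).trans (by gcongr; linarith)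
    rw [hfreq, ← pow_add, hζ.pow_eq_one_iff_dvd]
    rcases hj0 with rfl | hjn
    · exact dvd_zero n
    · exact ⟨1, by omega⟩
  · intro hcase
    refine (norm_S3sum_le h1 h2 ?_ ?_).trans (by gcongr; linarith)
    · rw [hfreq, hfreq, ← pow_add, pow_right_comm, hζ.pow_eq_one, one_pow]
    · rw [hfreq, hfreq, ← pow_add, Ne, hζ.pow_eq_one_iff_dvd]
      intro hdvd
      have := Nat.eq_zero_of_dvd_of_lt hdvd (by omega)
      omega
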